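/- Let G = (A, (Γ, γ, φ)) be a Manna-Pnueli game over arena A = (V, E) such that every event of Γ occurs in at most one atom of φ. Let Γ_F and Γ_G be the sets of events occurring in F-atoms, respectively G-atoms, of φ (the local events), and let Γ_EL be the set of events occurring in GF- or FG-atoms of φ. Define the transformed arena A' with node set V × 2^{Γ_F ∪ Γ_G}, edges from (v, L) to (v', upd(v, L)) for every edge (v, v') of A, where upd(v, L) = ((L ∩ γ(v)) ∩ Γ_G) ∪ ((L ∪ γ(v)) ∩ Γ_F), with (v, L) owned by the owner of v, and labeling γ'(v, L) = (γ(v) ∩ Γ_EL) ∪ L. For M ⊆ Γ let φ_M denote the formula obtained from φ by replacing every atom F a and G a by ⊤ if a ∈ M and by ⊥ otherwise. Define the objective O_2 on A' to contain exactly those plays (v_0, L_0)(v_1, L_1)... for which there exists M ⊆ Γ_F ∪ Γ_G such that L_n = M for all sufficiently large n and the play satisfies φ_M under the labeling γ'. Then for every node v ∈ V, the system player wins v in the MP game G if and only if the system player wins (v, Γ_G) in the game G_2 = (A', O_2). -/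

import Mathlib

/-- A game arena: a directed graph whose nodes are partitioned into system
nodes (`sys v` holds) and environment nodes, and in which every node has at
least one successor. -/
structure Arena (V : Type) where
  E : V → V → Prop
  sys : V → Prop
  succ_nonempty : ∀ v, ∃ w, E v w

/-- A play is an infinite path in the arena. -/
def Arena.IsPlay {V : Type} (A : Arena V) (π : ℕ → V) : Prop :=
  ∀ n, A.E (π n) (π (n + 1))

/-- A strategy assigns to every history `h = v₀...v_{n-1}` and current node
`v_n` a next node. -/
def Strategy (V : Type) : Type := List V → V → V

/-- A system strategy is valid if it always chooses successors at system
nodes. -/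
def Arena.ValidSysStrat {V : Type} (A : Arena V) (σ : Strategy V) : Prop :=
  ∀ (h : List V) (v : V), A.sys v → A.E v (σ h v)

/-- An environment strategy is valid if it always chooses successors at
environment nodes. -/
def Arena.ValidEnvStrat {V : Type} (A : Arena V) (σ : Strategy V) : Prop :=
  ∀ (h : List V) (v : V), ¬ A.sys v → A.E v (σ h v)

/-- A play `π` is compatible with a system strategy `σ` if at every system
node the play follows `σ`. -/
def Arena.SysCompatible {V : Type} (A : Arena V) (σ : Strategy V)
    (π : ℕ → V) : Prop :=
  ∀ n, A.sys (π n) → π (n + 1) = σ ((List.range n).map π) (π n)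

/-- A play `π` is compatible with an environment strategy `σ` if at every
environment node the play follows `σ`. -/
def Arena.EnvCompatible {V : Type} (A : Arena V) (σ : Strategy V)
    (π : ℕ → V) : Prop :=
  ∀ n, ¬ A.sys (π n) → π (n + 1) = σ ((List.range n).map π) (π n)

/-- The system player wins node `v` for the objective `O` if it has a valid
strategy such that all compatible plays starting at `v` are in `O`. -/
def Arena.SysWins {V : Type} (A : Arena V) (O : (ℕ → V) → Prop) (v : V) :
    Prop :=
  ∃ σ : Strategy V, A.ValidSysStrat σ ∧
    ∀ π : ℕ → V, A.IsPlay π → π 0 = v → A.SysCompatible σ π → O π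

/-- The environment player wins node `v` for the objective `O` if it has a
valid strategy such that all compatible plays starting at `v` are not in
`O`. -/
def Arena.EnvWins {V : Type} (A : Arena V) (O : (ℕ → V) → Prop) (v : V) :
    Prop :=
  ∃ σ : Strategy V, A.ValidEnvStrat σ ∧
    ∀ π : ℕ → V, A.IsPlay π → π 0 = v → A.EnvCompatible σ π → ¬ O π

/-- Manna-Pnueli formulas over a set `Γ` of events: positive Boolean formulas
over atoms `GF a`, `FG a`, `F a`, `G a`. -/
inductive MPForm (Γ : Type) where
  | tt : MPForm Γ
  | ff : MPForm Γ
  | gf : Γ → MPForm Γ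
  | fg : Γ → MPForm Γ
  | fa : Γ → MPForm Γ
  | ga : Γ → MPForm Γ
  | and : MPForm Γ → MPForm Γ → MPForm Γ
  | or : MPForm Γ → MPForm Γ → MPForm Γ

/-- Satisfaction of a Manna-Pnueli formula on an infinite sequence of sets of
events. -/
def MPForm.sat {Γ : Type} (π : ℕ → Finset Γ) : MPForm Γ → Prop
  | .tt => True
  | .ff => False
  | .gf a => ∀ i, ∃ j > i, a ∈ π j
  | .fg a => ∃ i, ∀ j > i, a ∈ π j
  | .fa a => ∃ i, a ∈ π i
  | .ga a => ∀ i, a ∈ π i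
  | .and φ ψ => φ.sat π ∧ ψ.sat π
  | .or φ ψ => φ.sat π ∨ ψ.sat π

/-- The events occurring in `F`-atoms of a Manna-Pnueli formula. -/
def MPForm.fEvents {Γ : Type} [DecidableEq Γ] : MPForm Γ → Finset Γ
  | .fa a => {a}
  | .and φ ψ => φ.fEvents ∪ ψ.fEvents
  | .or φ ψ => φ.fEvents ∪ ψ.fEvents
  | _ => ∅

/-- The events occurring in `G`-atoms of a Manna-Pnueli formula. -/
def MPForm.gEvents {Γ : Type} [DecidableEq Γ] : MPForm Γ → Finset Γ
  | .ga a => {a}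
  | .and φ ψ => φ.gEvents ∪ ψ.gEvents
  | .or φ ψ => φ.gEvents ∪ ψ.gEvents
  | _ => ∅

/-- The events occurring in `GF`-atoms of a Manna-Pnueli formula. -/
def MPForm.gfEvents {Γ : Type} [DecidableEq Γ] : MPForm Γ → Finset Γ
  | .gf a => {a}
  | .and φ ψ => φ.gfEvents ∪ ψ.gfEvents
  | .or φ ψ => φ.gfEvents ∪ ψ.gfEvents
  | _ => ∅

/-- The events occurring in `FG`-atoms of a Manna-Pnueli formula. -/
def MPForm.fgEvents {Γ : Type} [DecidableEq Γ] : MPForm Γ → Finset Γ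
  | .fg a => {a}
  | .and φ ψ => φ.fgEvents ∪ ψ.fgEvents
  | .or φ ψ => φ.fgEvents ∪ ψ.fgEvents
  | _ => ∅

/-- The number of atoms of a Manna-Pnueli formula in which the event `a`
occurs. -/
def MPForm.atomCount {Γ : Type} [DecidableEq Γ] (a : Γ) : MPForm Γ → ℕ
  | .gf b => if b = a then 1 else 0
  | .fg b => if b = a then 1 else 0
  | .fa b => if b = a then 1 else 0
  | .ga b => if b = a then 1 else 0
  | .and φ ψ => φ.atomCount a + ψ.atomCount a
  | .or φ ψ => φ.atomCount a + ψ.atomCount a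
  | _ => 0

/-- The memory update function: remove from the memory `L` all `ΓG`-events
that do not occur in the label of the current node `v` and add all
`ΓF`-events that occur in the label of `v`. -/
def upd {V Γ : Type} [DecidableEq Γ] (γ : V → Finset Γ) (ΓF ΓG : Finset Γ)
    (v : V) (L : Finset Γ) : Finset Γ :=
  ((L ∩ γ v) ∩ ΓG) ∪ ((L ∪ γ v) ∩ ΓF)

/-- The transformed arena `A'` over `V × 2^Γ`, with edges from `(v, L)` to
`(v', upd(v, L))` for every edge `(v, v')` of `A`, and with `(v, L)` owned by
the owner of `v`. -/
def Arena.withMemory {V Γ : Type} [DecidableEq Γ] (A : Arena V)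
    (γ : V → Finset Γ) (ΓF ΓG : Finset Γ) : Arena (V × Finset Γ) where
  E p q := A.E p.1 q.1 ∧ q.2 = upd γ ΓF ΓG p.1 p.2
  sys p := A.sys p.1
  succ_nonempty p := by
    obtain ⟨w, hw⟩ := A.succ_nonempty p.1
    exact ⟨(w, upd γ ΓF ΓG p.1 p.2), hw, rfl⟩

/-- The formula `φ_M` obtained from `φ` by replacing every atom `F a` and
every atom `G a` by `⊤` if `a ∈ M` and by `⊥` otherwise. -/
def MPForm.restrict {Γ : Type} [DecidableEq Γ] (M : Finset Γ) :
    MPForm Γ → MPForm Γ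
  | .fa a => if a ∈ M then .tt else .ff
  | .ga a => if a ∈ M then .tt else .ff
  | .and φ ψ => .and (φ.restrict M) (ψ.restrict M)
  | .or φ ψ => .or (φ.restrict M) (ψ.restrict M)
  | φ => φ

/-!
The memory component of a play of the product arena is a function of its projection to `A`: an
event of `Γ_F` is remembered once it has been seen, an event of `Γ_G` as long as it has been seen
at every step. Hence the memory stabilizes, at the set `M` of `F`-events that occur and `G`-events
that always occur, and since every event belongs to a single atom, `φ_M` under `γ'` holds
exactly when `φ` holds under `γ`. Strategies transfer in both directions because the memory can be
recomputed from the history.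
-/

open Filter

namespace MPForm

variable {Γ : Type}

theorem sat_ite_tt_ff (p : Prop) [Decidable p] (ρ : ℕ → Finset Γ) :
    (if p then tt else ff).sat ρ ↔ p := by
  split_ifs <;> simp [sat, *]

variable [DecidableEq Γ]

theorem notMem_events_of_atomCount_eq_zero {ψ : MPForm Γ} {a : Γ} (h : ψ.atomCount a = 0) :
    a ∉ ψ.fEvents ∧ a ∉ ψ.gEvents ∧ a ∉ ψ.gfEvents ∧ a ∉ ψ.fgEvents := by
  induction ψ <;> simp_all [fEvents, gEvents, gfEvents, fgEvents, atomCount, eq_comm]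

theorem notMem_gEvents_of_mem_fEvents {ψ : MPForm Γ} {a : Γ} (h : ψ.atomCount a ≤ 1)
    (ha : a ∈ ψ.fEvents) : a ∉ ψ.gEvents := by
  induction ψ with
  | and ψ₁ ψ₂ ih₁ ih₂ | or ψ₁ ψ₂ ih₁ ih₂ =>
    simp only [fEvents, gEvents, atomCount, Finset.mem_union] at h ha ⊢
    rcases (show ψ₁.atomCount a = 0 ∨ ψ₂.atomCount a = 0 by omega) with h0 | h0
    · obtain ⟨hf, hg, -, -⟩ := notMem_events_of_atomCount_eq_zero h0
      simpa only [hf, hg, false_or] using ih₂ (by omega) (by simpa only [hf, false_or] using ha)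
    · obtain ⟨hf, hg, -, -⟩ := notMem_events_of_atomCount_eq_zero h0
      simpa only [hf, hg, or_false] using ih₁ (by omega) (by simpa only [hf, or_false] using ha)
  | _ => simp_all [fEvents, gEvents]

theorem notMem_localEvents_of_mem_elEvents {ψ : MPForm Γ} {a : Γ} (h : ψ.atomCount a ≤ 1)
    (ha : a ∈ ψ.gfEvents ∪ ψ.fgEvents) : a ∉ ψ.fEvents ∪ ψ.gEvents := by
  induction ψ with
  | and ψ₁ ψ₂ ih₁ ih₂ | or ψ₁ ψ₂ ih₁ ih₂ =>
    simp only [fEvents, gEvents, gfEvents, fgEvents, atomCount, Finset.mem_union]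
      at h ha ih₁ ih₂ ⊢
    rcases (show ψ₁.atomCount a = 0 ∨ ψ₂.atomCount a = 0 by omega) with h0 | h0
    · obtain ⟨hf, hg, hgf, hfg⟩ := notMem_events_of_atomCount_eq_zero h0
      simpa only [hf, hg, false_or] using
        ih₂ (by omega) (by simpa only [hgf, hfg, false_or] using ha)
    · obtain ⟨hf, hg, hgf, hfg⟩ := notMem_events_of_atomCount_eq_zero h0
      simpa only [hf, hg, or_false] using
        ih₁ (by omega) (by simpa only [hgf, hfg, or_false] using ha)
  | _ => simp_all [fEvents, gEvents, gfEvents, fgEvents]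

theorem restrict_sat_iff {ρ ρ' : ℕ → Finset Γ} {M : Finset Γ} {ψ : MPForm Γ}
    (hF : ∀ a ∈ ψ.fEvents, a ∈ M ↔ ∃ k, a ∈ ρ k)
    (hG : ∀ a ∈ ψ.gEvents, a ∈ M ↔ ∀ k, a ∈ ρ k)
    (hGF : ∀ a ∈ ψ.gfEvents, ∀ n, a ∈ ρ' n ↔ a ∈ ρ n)
    (hFG : ∀ a ∈ ψ.fgEvents, ∀ n, a ∈ ρ' n ↔ a ∈ ρ n) :
    (ψ.restrict M).sat ρ' ↔ ψ.sat ρ := by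
  induction ψ with
  | tt | ff => rfl
  | gf a => simp only [restrict, sat, hGF a (Finset.mem_singleton_self a)]
  | fg a => simp only [restrict, sat, hFG a (Finset.mem_singleton_self a)]
  | fa a => exact (sat_ite_tt_ff _ _).trans (hF a (Finset.mem_singleton_self a))
  | ga a => exact (sat_ite_tt_ff _ _).trans (hG a (Finset.mem_singleton_self a))
  | and ψ₁ ψ₂ ih₁ ih₂ | or ψ₁ ψ₂ ih₁ ih₂ =>
    have e₁ := ih₁ (fun a ha => hF a (Finset.mem_union_left _ ha))
      (fun a ha => hG a (Finset.mem_union_left _ ha))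
      (fun a ha => hGF a (Finset.mem_union_left _ ha))
      (fun a ha => hFG a (Finset.mem_union_left _ ha))
    have e₂ := ih₂ (fun a ha => hF a (Finset.mem_union_right _ ha))
      (fun a ha => hG a (Finset.mem_union_right _ ha))
      (fun a ha => hGF a (Finset.mem_union_right _ ha))
      (fun a ha => hFG a (Finset.mem_union_right _ ha))
    simp only [restrict, sat, e₁, e₂]

end MPForm

theorem Filter.eventually_exists_lt_iff (P : ℕ → Prop) :
    ∀ᶠ n in atTop, ((∃ k < n, P k) ↔ ∃ k, P k) := by
  by_cases h : ∃ k, P k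
  · obtain ⟨k, hk⟩ := h
    filter_upwards [eventually_gt_atTop k] with n hn
    exact iff_of_true ⟨k, hn, hk⟩ ⟨k, hk⟩
  · exact .of_forall fun n => iff_of_false (fun ⟨k, _, hk⟩ => h ⟨k, hk⟩) h

theorem Filter.eventually_forall_lt_iff (P : ℕ → Prop) :
    ∀ᶠ n in atTop, ((∀ k < n, P k) ↔ ∀ k, P k) := by
  filter_upwards [eventually_exists_lt_iff (fun k => ¬P k)] with n hn
  simpa only [not_exists, not_and, not_not] using hn.not

theorem Filter.exists_eventually_finset_eq_of_forall_mem {ι α : Type*} {l : Filter ι}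
    {s : ι → Finset α} {T : Finset α} (hT : ∀ i, s i ⊆ T)
    (h : ∀ a ∈ T, ∃ c : Prop, ∀ᶠ i in l, (a ∈ s i ↔ c)) :
    ∃ M, ∀ᶠ i in l, s i = M := by
  classical
  choose! c hc using h
  refine ⟨T.filter c, ?_⟩
  filter_upwards [(eventually_all_finset T).2 hc] with i hi
  ext a
  by_cases ha : a ∈ T
  · simp [hi a ha, ha]
  · simpa [ha] using fun h => ha (hT i h)

section Memory

variable {V Γ : Type} [DecidableEq Γ] (γ : V → Finset Γ) (ΓF ΓG : Finset Γ)

def memory (L₀ : Finset Γ) (π : ℕ → V) : ℕ → Finset Γ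
  | 0 => L₀
  | n + 1 => upd γ ΓF ΓG (π n) (memory L₀ π n)

variable {γ ΓF ΓG} {L₀ M : Finset Γ} {π : ℕ → V} {a : Γ}

theorem memory_subset (hL₀ : L₀ ⊆ ΓF ∪ ΓG) (n : ℕ) : memory γ ΓF ΓG L₀ π n ⊆ ΓF ∪ ΓG := by
  cases n with
  | zero => exact hL₀
  | succ n =>
    intro a ha
    simp only [memory, upd, Finset.mem_union, Finset.mem_inter] at ha ⊢
    tauto

theorem mem_upd_of_mem_F (ha : a ∈ ΓF) (v : V) (L : Finset Γ) :
    a ∈ upd γ ΓF ΓG v L ↔ a ∈ L ∨ a ∈ γ v := by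
  simp only [upd, Finset.mem_union, Finset.mem_inter, ha, and_true]
  tauto

theorem mem_upd_of_mem_G (ha : a ∈ ΓG) (ha' : a ∉ ΓF) (v : V) (L : Finset Γ) :
    a ∈ upd γ ΓF ΓG v L ↔ a ∈ L ∧ a ∈ γ v := by
  simp [upd, ha, ha']

theorem mem_memory_iff_of_mem_F (ha : a ∈ ΓF) (n : ℕ) :
    a ∈ memory γ ΓF ΓG L₀ π n ↔ a ∈ L₀ ∨ ∃ k < n, a ∈ γ (π k) := by
  induction n with
  | zero => simp [memory]
  | succ n ih =>
    rw [memory, mem_upd_of_mem_F ha, ih]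
    simp only [Nat.lt_succ_iff_lt_or_eq, or_and_right, exists_or, exists_eq_left, or_assoc]

theorem mem_memory_iff_of_mem_G (ha : a ∈ ΓG) (ha' : a ∉ ΓF) (n : ℕ) :
    a ∈ memory γ ΓF ΓG L₀ π n ↔ a ∈ L₀ ∧ ∀ k < n, a ∈ γ (π k) := by
  induction n with
  | zero => simp [memory]
  | succ n ih =>
    rw [memory, mem_upd_of_mem_G ha ha', ih]
    simp only [Nat.lt_succ_iff_lt_or_eq, or_imp, forall_and, forall_eq, and_assoc]

theorem eventually_mem_memory_iff_of_mem_F (ha : a ∈ ΓF) :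
    ∀ᶠ n in atTop, (a ∈ memory γ ΓF ΓG L₀ π n ↔ a ∈ L₀ ∨ ∃ k, a ∈ γ (π k)) :=
  (eventually_exists_lt_iff _).mono fun n hn => by rw [mem_memory_iff_of_mem_F ha, hn]

theorem eventually_mem_memory_iff_of_mem_G (ha : a ∈ ΓG) (ha' : a ∉ ΓF) :
    ∀ᶠ n in atTop, (a ∈ memory γ ΓF ΓG L₀ π n ↔ a ∈ L₀ ∧ ∀ k, a ∈ γ (π k)) :=
  (eventually_forall_lt_iff _).mono fun n hn => by rw [mem_memory_iff_of_mem_G ha ha', hn]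

theorem exists_eventually_memory_eq (hL₀ : L₀ ⊆ ΓF ∪ ΓG) :
    ∃ M, ∀ᶠ n in atTop, memory γ ΓF ΓG L₀ π n = M :=
  exists_eventually_finset_eq_of_forall_mem (memory_subset hL₀) fun a ha =>
    if hF : a ∈ ΓF then ⟨_, eventually_mem_memory_iff_of_mem_F hF⟩
    else ⟨_, eventually_mem_memory_iff_of_mem_G ((Finset.mem_union.1 ha).resolve_left hF) hF⟩

theorem mem_iff_of_eventually_memory_eq_of_mem_F
    (hM : ∀ᶠ n in atTop, memory γ ΓF ΓG L₀ π n = M) (ha : a ∈ ΓF) :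
    a ∈ M ↔ a ∈ L₀ ∨ ∃ k, a ∈ γ (π k) := by
  obtain ⟨n, hn, hn'⟩ := (hM.and (eventually_mem_memory_iff_of_mem_F ha)).exists
  rwa [hn] at hn'

theorem mem_iff_of_eventually_memory_eq_of_mem_G
    (hM : ∀ᶠ n in atTop, memory γ ΓF ΓG L₀ π n = M) (ha : a ∈ ΓG) (ha' : a ∉ ΓF) :
    a ∈ M ↔ a ∈ L₀ ∧ ∀ k, a ∈ γ (π k) := by
  obtain ⟨n, hn, hn'⟩ := (hM.and (eventually_mem_memory_iff_of_mem_G ha ha')).exists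
  rwa [hn] at hn'

end Memory

section Objective

variable {V Γ : Type} [DecidableEq Γ] (γ : V → Finset Γ) {φ : MPForm Γ} (π : ℕ → V)

theorem MPForm.restrict_sat_memory_iff (hφ : ∀ a, φ.atomCount a ≤ 1) {M : Finset Γ}
    (hM : ∀ᶠ n in atTop, memory γ φ.fEvents φ.gEvents φ.gEvents π n = M) :
    (φ.restrict M).sat (fun n => (γ (π n) ∩ (φ.gfEvents ∪ φ.fgEvents)) ∪
      memory γ φ.fEvents φ.gEvents φ.gEvents π n) ↔ φ.sat (fun n => γ (π n)) := by
  have hEL : ∀ a ∈ φ.gfEvents ∪ φ.fgEvents, ∀ n, a ∈ (γ (π n) ∩ (φ.gfEvents ∪ φ.fgEvents)) ∪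
      memory γ φ.fEvents φ.gEvents φ.gEvents π n ↔ a ∈ γ (π n) := fun a ha n => by
    have hn : a ∉ memory γ φ.fEvents φ.gEvents φ.gEvents π n := fun h =>
      notMem_localEvents_of_mem_elEvents (hφ a) ha (memory_subset Finset.subset_union_right n h)
    simp [ha, hn]
  refine restrict_sat_iff (fun a ha => ?_) (fun a ha => ?_)
    (fun a ha => hEL a (Finset.mem_union_left _ ha))
    (fun a ha => hEL a (Finset.mem_union_right _ ha))
  · simpa [notMem_gEvents_of_mem_fEvents (hφ a) ha] using
      mem_iff_of_eventually_memory_eq_of_mem_F hM ha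
  · have ha' : a ∉ φ.fEvents := fun h => notMem_gEvents_of_mem_fEvents (hφ a) h ha
    simpa [ha] using mem_iff_of_eventually_memory_eq_of_mem_G hM ha ha'

theorem MPForm.exists_restrict_sat_memory_iff (hφ : ∀ a, φ.atomCount a ≤ 1) :
    (∃ M : Finset Γ, M ⊆ φ.fEvents ∪ φ.gEvents ∧
      (∃ N, ∀ n ≥ N, memory γ φ.fEvents φ.gEvents φ.gEvents π n = M) ∧
      (φ.restrict M).sat (fun n => (γ (π n) ∩ (φ.gfEvents ∪ φ.fgEvents)) ∪
        memory γ φ.fEvents φ.gEvents φ.gEvents π n)) ↔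
    φ.sat (fun n => γ (π n)) := by
  constructor
  · rintro ⟨M, -, hM, hsat⟩
    exact (restrict_sat_memory_iff γ π hφ (eventually_atTop.2 hM)).1 hsat
  · intro h
    obtain ⟨M, hM⟩ := exists_eventually_memory_eq (π := π) (γ := γ) Finset.subset_union_right
    obtain ⟨n, hn⟩ := hM.exists
    exact ⟨M, hn ▸ memory_subset Finset.subset_union_right n, eventually_atTop.1 hM,
      (restrict_sat_memory_iff γ π hφ hM).2 h⟩

end Objective

section Transfer

variable {V Γ : Type} [DecidableEq Γ] {A : Arena V} {γ : V → Finset Γ} {ΓF ΓG L₀ : Finset Γ}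

def liftHistory (γ : V → Finset Γ) (ΓF ΓG : Finset Γ) :
    Finset Γ → List V → List (V × Finset Γ)
  | _, [] => []
  | L, w :: h => (w, L) :: liftHistory γ ΓF ΓG (upd γ ΓF ΓG w L) h

theorem liftHistory_append_singleton (L : Finset Γ) (h : List V) (w : V) :
    liftHistory γ ΓF ΓG L (h ++ [w]) =
      liftHistory γ ΓF ΓG L h ++ [(w, h.foldl (fun L w => upd γ ΓF ΓG w L) L)] := by
  induction h generalizing L with
  | nil => rfl
  | cons x h ih => simp [liftHistory, ih]

theorem foldl_upd_range_map (π : ℕ → V) (n : ℕ) :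
    ((List.range n).map π).foldl (fun L w => upd γ ΓF ΓG w L) L₀ = memory γ ΓF ΓG L₀ π n := by
  induction n with
  | zero => rfl
  | succ n ih => simp [List.range_succ, ih, memory]

theorem liftHistory_range_map (π : ℕ → V) (n : ℕ) :
    liftHistory γ ΓF ΓG L₀ ((List.range n).map π) =
      (List.range n).map fun k => (π k, memory γ ΓF ΓG L₀ π k) := by
  induction n with
  | zero => rfl
  | succ n ih => simp [List.range_succ, liftHistory_append_singleton, ih, foldl_upd_range_map]

theorem Arena.IsPlay.withMemory {π : ℕ → V} (hπ : A.IsPlay π) :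
    (A.withMemory γ ΓF ΓG).IsPlay fun n => (π n, memory γ ΓF ΓG L₀ π n) :=
  fun n => ⟨hπ n, rfl⟩

theorem Arena.IsPlay.of_withMemory {π' : ℕ → V × Finset Γ}
    (hπ' : (A.withMemory γ ΓF ΓG).IsPlay π') :
    A.IsPlay fun n => (π' n).1 :=
  fun n => (hπ' n).1

theorem Arena.IsPlay.eq_memory {π' : ℕ → V × Finset Γ} (hπ' : (A.withMemory γ ΓF ΓG).IsPlay π')
    (h0 : (π' 0).2 = L₀) : π' = fun n => ((π' n).1, memory γ ΓF ΓG L₀ (fun k => (π' k).1) n) := by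
  funext n
  refine Prod.ext rfl ?_
  induction n with
  | zero => exact h0
  | succ n ih => rw [(hπ' n).2, ih]; rfl

theorem Arena.SysWins.withMemory {O : (ℕ → V) → Prop} {O' : (ℕ → V × Finset Γ) → Prop}
    (hO : ∀ π, O π → O' fun n => (π n, memory γ ΓF ΓG L₀ π n)) {v : V} (h : A.SysWins O v) :
    (A.withMemory γ ΓF ΓG).SysWins O' (v, L₀) := by
  obtain ⟨σ, hσ, hwin⟩ := h
  refine ⟨fun h p => (σ (h.map Prod.fst) p.1, upd γ ΓF ΓG p.1 p.2),
    fun h p hp => ⟨hσ _ _ hp, rfl⟩, fun π' hπ' h0 hcomp => ?_⟩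
  rw [hπ'.eq_memory (congrArg Prod.snd h0)]
  refine hO _ (hwin _ hπ'.of_withMemory (congrArg Prod.fst h0) fun n hn => ?_)
  simpa [Function.comp_def] using congrArg Prod.fst (hcomp n hn)

theorem Arena.SysWins.of_withMemory {O : (ℕ → V) → Prop} {O' : (ℕ → V × Finset Γ) → Prop}
    (hO : ∀ π, (O' fun n => (π n, memory γ ΓF ΓG L₀ π n)) → O π) {v : V}
    (h : (A.withMemory γ ΓF ΓG).SysWins O' (v, L₀)) : A.SysWins O v := by
  obtain ⟨σ', hσ', hwin⟩ := h
  refine ⟨fun h w => (σ' (liftHistory γ ΓF ΓG L₀ h)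
      (w, h.foldl (fun L w => upd γ ΓF ΓG w L) L₀)).1,
    fun h w hw => (hσ' _ (w, _) hw).1, fun π hπ h0 hcomp => hO π ?_⟩
  refine hwin _ hπ.withMemory (by simp [memory, h0]) fun n hn => Prod.ext ?_ ?_
  · simpa [liftHistory_range_map, foldl_upd_range_map] using hcomp n hn
  · exact ((hσ' _ _ hn).2).symm

end Transfer

theorem mp_game_iff_el_dag_game_general
    {V Γ : Type} [DecidableEq Γ]
    (A : Arena V) (γ : V → Finset Γ) (φ : MPForm Γ)
    (hunique : ∀ a : Γ, φ.atomCount a ≤ 1)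
    (v : V) :
    A.SysWins (fun π => φ.sat (fun n => γ (π n))) v ↔
    (A.withMemory γ φ.fEvents φ.gEvents).SysWins
      (fun π' => ∃ M : Finset Γ, M ⊆ φ.fEvents ∪ φ.gEvents ∧
        (∃ N, ∀ n ≥ N, (π' n).2 = M) ∧
        (φ.restrict M).sat
          (fun n => ((γ (π' n).1 ∩ (φ.gfEvents ∪ φ.fgEvents)) ∪ (π' n).2)))
      (v, φ.gEvents) :=
  ⟨.withMemory fun π => (φ.exists_restrict_sat_memory_iff γ π hunique).2,
    .of_withMemory fun π => (φ.exists_restrict_sat_memory_iff γ π hunique).1⟩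

/-- reduction of Manna-Pnueli games to DAGs of Emerson-Lei
games. The system player wins `v` in the MP game `G = (A, (Γ, γ, φ))` iff it
wins `(v, Γ_G)` in the game `G₂ = (A', O₂)`, where `O₂` contains exactly
those plays whose memory component eventually stabilizes to some
`M ⊆ Γ_F ∪ Γ_G` and which satisfy `φ_M` under the labeling `γ'`. -/
theorem mp_game_iff_el_dag_game
    {V Γ : Type} [Fintype V] [Fintype Γ] [DecidableEq Γ]
    (A : Arena V) (γ : V → Finset Γ) (φ : MPForm Γ)
    (hunique : ∀ a : Γ, φ.atomCount a ≤ 1)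
    (v : V) :
    A.SysWins (fun π => φ.sat (fun n => γ (π n))) v ↔
    (A.withMemory γ φ.fEvents φ.gEvents).SysWins
      (fun π' => ∃ M : Finset Γ, M ⊆ φ.fEvents ∪ φ.gEvents ∧
        (∃ N, ∀ n ≥ N, (π' n).2 = M) ∧
        (φ.restrict M).sat
          (fun n => ((γ (π' n).1 ∩ (φ.gfEvents ∪ φ.fgEvents)) ∪ (π' n).2)))
      (v, φ.gEvents) :=
  mp_game_iff_el_dag_game_general A γ φ hunique v
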